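/- Let 𝒢 = {A_1, …, A_k} ⊂ UT(4,ℤ) with A_i = UT(α_i, β_i, κ_i; δ_i, ε_i, φ_i) and suppose κ_i = 0 for all i = 1, …, k. For each i let H_i be the 3×3 integer matrix with rows (1, α_i, δ_i), (0, 1, β_i), (0, 0, 1) (an element of the Heisenberg group H_3). Then U_{10} is reachable for A_1, …, A_k (some nonempty product of elements of 𝒢 lies in U_{10}) if and only if the 3×3 identity matrix belongs to the subsemigroup generated by H_1, …, H_k. -/
import Mathlib


open Finset

/-- The 4×4 upper unitriangular integer matrix `UT(a,b,c;d,e,f)`. -/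
def UT (a b c d e f : ℤ) : Matrix (Fin 4) (Fin 4) ℤ :=
  !![1, a, d, f; 0, 1, b, e; 0, 0, 1, c; 0, 0, 0, 1]

/-- `U_{10} = {UT(0,0,0;0,e,f) : e, f ∈ ℤ}`. -/
def U10 : Set (Matrix (Fin 4) (Fin 4) ℤ) :=
  {M | ∃ e f, M = UT 0 0 0 0 e f}

/-- The 3×3 Heisenberg-group matrix with upper entries `a, d, b`. -/
def Heis (a d b : ℤ) : Matrix (Fin 3) (Fin 3) ℤ :=
  !![1, a, d; 0, 1, b; 0, 0, 1]

lemma UT_mul (a b d e f a' b' d' e' f' : ℤ) :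
    UT a b 0 d e f * UT a' b' 0 d' e' f' =
      UT (a + a') (b + b') 0 (d + a * b' + d') (e + e') (f + a * e' + f') := by
  ext i j
  fin_cases i <;> fin_cases j <;>
    simp [UT, Matrix.mul_apply, Fin.sum_univ_four, Matrix.vecHead, Matrix.vecTail] <;> ring

lemma Heis_mul (a d b a' d' b' : ℤ) :
    Heis a d b * Heis a' d' b' = Heis (a + a') (d + a * b' + d') (b + b') := by
  ext i j
  fin_cases i <;> fin_cases j <;>
    simp [Heis, Matrix.mul_apply, Fin.sum_univ_three, Matrix.vecHead, Matrix.vecTail] <;> ring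

lemma UT_entries (a b c d e f : ℤ) :
    (UT a b c d e f) 0 1 = a ∧ (UT a b c d e f) 1 2 = b ∧ (UT a b c d e f) 0 2 = d := by
  simp [UT]

lemma Heis_one : Heis 0 0 0 = (1 : Matrix (Fin 3) (Fin 3) ℤ) := by
  ext i j; fin_cases i <;> fin_cases j <;> simp [Heis, Matrix.vecHead, Matrix.vecTail]

lemma Heis_entries (a d b : ℤ) :
    (Heis a d b) 0 1 = a ∧ (Heis a d b) 1 2 = b ∧ (Heis a d b) 0 2 = d := by
  simp [Heis]

theorem stmt19 (k : ℕ) (α β κ δ ε φ : Fin k → ℤ)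
    (A : Fin k → Matrix (Fin 4) (Fin 4) ℤ)
    (hA : ∀ i, A i = UT (α i) (β i) (κ i) (δ i) (ε i) (φ i))
    (hκ : ∀ i, κ i = 0)
    (H : Fin k → Matrix (Fin 3) (Fin 3) ℤ)
    (hH : ∀ i, H i = Heis (α i) (δ i) (β i)) :
    (∃ M ∈ Subsemigroup.closure (Set.range A), M ∈ U10) ↔
      (1 : Matrix (Fin 3) (Fin 3) ℤ) ∈ Subsemigroup.closure (Set.range H) := by
  constructor
  · rintro ⟨M, hM, hU⟩
    -- every element of closure A is UT a b 0 d e f with Heis a d b in closure H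
    have key : ∀ N ∈ Subsemigroup.closure (Set.range A),
        ∃ a b d e f, N = UT a b 0 d e f ∧
          Heis a d b ∈ Subsemigroup.closure (Set.range H) := by
      intro N hN
      induction hN using Subsemigroup.closure_induction with
      | mem x hx =>
        obtain ⟨i, rfl⟩ := hx
        exact ⟨α i, β i, δ i, ε i, φ i, by rw [hA i, hκ i],
          Subsemigroup.subset_closure ⟨i, hH i⟩⟩
      | mul x y _ _ ihx ihy =>
        obtain ⟨a, b, d, e, f, rfl, hx'⟩ := ihx
        obtain ⟨a', b', d', e', f', rfl, hy'⟩ := ihy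
        exact ⟨a + a', b + b', d + a * b' + d', e + e', f + a * e' + f',
          UT_mul .., by rw [← Heis_mul]; exact Subsemigroup.mul_mem _ hx' hy'⟩
    obtain ⟨a, b, d, e, f, rfl, hHe⟩ := key M hM
    obtain ⟨e', f', hef⟩ := hU
    have ha : a = 0 := by have := congrFun (congrFun hef 0) 1; simpa [UT] using this
    have hb : b = 0 := by have := congrFun (congrFun hef 1) 2; simpa [UT] using this
    have hd : d = 0 := by have := congrFun (congrFun hef 0) 2; simpa [UT] using this
    rw [ha, hb, hd, Heis_one] at hHe
    exact hHe
  · intro h1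
    have key : ∀ N ∈ Subsemigroup.closure (Set.range H),
        ∃ a b d, N = Heis a d b ∧
          ∃ e f, UT a b 0 d e f ∈ Subsemigroup.closure (Set.range A) := by
      intro N hN
      induction hN using Subsemigroup.closure_induction with
      | mem x hx =>
        obtain ⟨i, rfl⟩ := hx
        exact ⟨α i, β i, δ i, hH i, ε i, φ i,
          Subsemigroup.subset_closure ⟨i, by rw [hA i, hκ i]⟩⟩
      | mul x y _ _ ihx ihy =>
        obtain ⟨a, b, d, rfl, e, f, hx'⟩ := ihx
        obtain ⟨a', b', d', rfl, e', f', hy'⟩ := ihy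
        refine ⟨a + a', b + b', d + a * b' + d', Heis_mul .., e + e', f + a * e' + f', ?_⟩
        rw [← UT_mul]
        exact Subsemigroup.mul_mem _ hx' hy'
    obtain ⟨a, b, d, hE, e, f, hM⟩ := key 1 h1
    have ha : a = 0 := by have := congrFun (congrFun hE 0) 1; simpa [Heis] using this.symm
    have hb : b = 0 := by have := congrFun (congrFun hE 1) 2; simpa [Heis] using this.symm
    have hd : d = 0 := by have := congrFun (congrFun hE 0) 2; simpa [Heis] using this.symm
    rw [ha, hb, hd] at hM
    exact ⟨_, hM, e, f, rfl⟩
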